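/- Existence of a balanced family of subspaces: let P_e ∈ (0,1), ε ∈ (0,1) and l ∈ ℕ. If d_min > ln(P_e/8)/ln ε and μ_ε{y : |S_y| > 2^l} > P_e, then there exists a family P₁ of F₂-subspaces of F₂^K, each of cardinality 2^{l+1}, such that (3/8)·μ_ε{y : |S_y| > 2^l} ≤ μ_ε(∪_{V∈P₁} E_V) ≤ (1/2)·μ_ε{y : |S_y| > 2^l}. -/
import Mathlib


/-- The product Bernoulli(ε) measure of a set of erasure patterns `y : Fin N → Bool`:
each coordinate is independently `true` (erased) with probability `ε`. -/
noncomputable def prodMeas {N : ℕ} (ε : ℝ) (S : Set (Fin N → Bool)) : ℝ :=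
  ∑ y : Fin N → Bool,
    Set.indicator S (fun y => ∏ i, (if y i = true then ε else 1 - ε)) y

/-- The support `I_u` of the codeword `uG`: the positions where `uG` equals 1. -/
def Iu {K N : ℕ} (G : Matrix (Fin K) (Fin N) (ZMod 2)) (u : Fin K → ZMod 2) :
    Finset (Fin N) :=
  Finset.univ.filter (fun i => Matrix.vecMul u G i = 1)

/-- `E_u`: the event that the message `u` is compatible with the received word,
i.e., every position of `I_u` is erased. -/
def Eu {K N : ℕ} (G : Matrix (Fin K) (Fin N) (ZMod 2)) (u : Fin K → ZMod 2) :
    Set (Fin N → Bool) :=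
  {y | ∀ i ∈ Iu G u, y i = true}

/-- `E_V`: the event that every message in the subspace `V` is compatible with
the received word. -/
def EV {K N : ℕ} (G : Matrix (Fin K) (Fin N) (ZMod 2))
    (V : Submodule (ZMod 2) (Fin K → ZMod 2)) : Set (Fin N → Bool) :=
  ⋂ u ∈ (V : Set (Fin K → ZMod 2)), Eu G u

/-- `S_y`: the set of messages compatible with the erasure pattern `y`. -/
def Sy {K N : ℕ} (G : Matrix (Fin K) (Fin N) (ZMod 2)) (y : Fin N → Bool) :
    Set (Fin K → ZMod 2) :=
  {u | ∀ i, y i = false → Matrix.vecMul u G i = 0}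
open Finset in
lemma prodMeas_nonneg {N : ℕ} {ε : ℝ} (h0 : 0 ≤ ε) (h1 : ε ≤ 1) (S : Set (Fin N → Bool)) :
    0 ≤ prodMeas ε S := by
  apply Finset.sum_nonneg
  intro y _
  apply Set.indicator_nonneg
  intro y _
  exact Finset.prod_nonneg fun i _ => by split <;> linarith

lemma weight_nonneg {N : ℕ} {ε : ℝ} (h0 : 0 ≤ ε) (h1 : ε ≤ 1) (y : Fin N → Bool) :
    0 ≤ ∏ i, (if y i = true then ε else 1 - ε) :=
  Finset.prod_nonneg fun i _ => by split <;> linarith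

lemma prodMeas_mono {N : ℕ} {ε : ℝ} (h0 : 0 ≤ ε) (h1 : ε ≤ 1) {A B : Set (Fin N → Bool)}
    (hAB : A ⊆ B) : prodMeas ε A ≤ prodMeas ε B := by
  apply Finset.sum_le_sum
  intro y _
  exact Set.indicator_le_indicator_of_subset hAB (fun y => weight_nonneg h0 h1 y) y

lemma prodMeas_union_le {N : ℕ} {ε : ℝ} (h0 : 0 ≤ ε) (h1 : ε ≤ 1) (A B : Set (Fin N → Bool)) :
    prodMeas ε (A ∪ B) ≤ prodMeas ε A + prodMeas ε B := by
  rw [prodMeas, prodMeas, prodMeas, ← Finset.sum_add_distrib]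
  apply Finset.sum_le_sum
  intro y _
  classical
  by_cases hA : y ∈ A
  · rw [Set.indicator_of_mem (Set.mem_union_left _ hA), Set.indicator_of_mem hA]
    have := Set.indicator_nonneg (fun z _ => weight_nonneg (N := N) h0 h1 z) (s := B) y
    linarith
  · by_cases hB : y ∈ B
    · rw [Set.indicator_of_mem (Set.mem_union_right _ hB), Set.indicator_of_notMem hA,
        Set.indicator_of_mem hB]
      linarith
    · rw [Set.indicator_of_notMem (by simp [hA, hB]), Set.indicator_of_notMem hA,
        Set.indicator_of_notMem hB]
      linarith

lemma prodMeas_empty {N : ℕ} (ε : ℝ) : prodMeas ε (∅ : Set (Fin N → Bool)) = 0 := by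
  simp [prodMeas]
lemma prodMeas_Eu {K N : ℕ} (G : Matrix (Fin K) (Fin N) (ZMod 2)) (u : Fin K → ZMod 2)
    {ε : ℝ} (h0 : 0 ≤ ε) (h1 : ε ≤ 1) :
    prodMeas ε (Eu G u) = ε ^ (Iu G u).card := by
  classical
  rw [prodMeas]
  have key : ∀ y : Fin N → Bool,
      Set.indicator (Eu G u) (fun y => ∏ i, (if y i = true then ε else 1 - ε)) y
      = ∏ i, (if i ∈ Iu G u then (if y i = true then ε else 0)
              else (if y i = true then ε else 1 - ε)) := by
    intro y
    by_cases hy : y ∈ Eu G u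
    · rw [Set.indicator_of_mem hy]
      apply Finset.prod_congr rfl
      intro i _
      by_cases hi : i ∈ Iu G u
      · simp [hi, hy i hi]
      · simp [hi]
    · rw [Set.indicator_of_notMem hy]
      have : ∃ i ∈ Iu G u, y i = false := by
        simp only [Eu, Set.mem_setOf_eq, not_forall] at hy
        obtain ⟨i, hi, hyi⟩ := hy
        exact ⟨i, hi, by simpa using hyi⟩
      obtain ⟨i, hi, hyi⟩ := this
      exact (Finset.prod_eq_zero (Finset.mem_univ i) (by simp [hi, hyi])).symm
  simp_rw [key]
  rw [← Fintype.prod_sum (fun i (b : Bool) =>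
      (if i ∈ Iu G u then (if b = true then ε else 0)
        else (if b = true then ε else 1 - ε)))]
  have : ∀ i : Fin N, (∑ b : Bool, (if i ∈ Iu G u then (if b = true then ε else 0)
        else (if b = true then ε else 1 - ε))) = if i ∈ Iu G u then ε else 1 := by
    intro i
    by_cases hi : i ∈ Iu G u <;> simp [hi] <;> ring
  simp_rw [this]
  rw [Finset.prod_ite_mem, Finset.univ_inter, Finset.prod_const]
lemma EV_subset_Eu {K N : ℕ} (G : Matrix (Fin K) (Fin N) (ZMod 2))
    (V : Submodule (ZMod 2) (Fin K → ZMod 2)) {u : Fin K → ZMod 2} (hu : u ∈ V) :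
    EV G V ⊆ Eu G u :=
  Set.biInter_subset_of_mem hu

/-- `S_y` as a submodule. -/
def SyMod {K N : ℕ} (G : Matrix (Fin K) (Fin N) (ZMod 2)) (y : Fin N → Bool) :
    Submodule (ZMod 2) (Fin K → ZMod 2) where
  carrier := Sy G y
  add_mem' := by
    intro a b ha hb i hi
    rw [Matrix.add_vecMul]
    simp [ha i hi, hb i hi]
  zero_mem' := by
    intro i hi
    simp [Matrix.zero_vecMul]
  smul_mem' := by
    intro c a ha i hi
    rw [Matrix.smul_vecMul]
    simp [ha i hi]

lemma mem_EV_iff {K N : ℕ} (G : Matrix (Fin K) (Fin N) (ZMod 2))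
    (V : Submodule (ZMod 2) (Fin K → ZMod 2)) (y : Fin N → Bool) :
    y ∈ EV G V ↔ (V : Set (Fin K → ZMod 2)) ⊆ Sy G y := by
  constructor
  · intro hy u hu i hi
    have h1 : ∀ j ∈ Iu G u, y j = true := EV_subset_Eu G V hu hy
    by_contra hne
    have h2 : Matrix.vecMul u G i = 1 := by
      have : ∀ a : ZMod 2, a ≠ 0 → a = 1 := by decide
      exact this _ hne
    have : i ∈ Iu G u := by simp [Iu, h2]
    rw [h1 i this] at hi
    simp at hi
  · intro h
    refine Set.mem_iInter₂.2 fun u hu i hi => ?_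
    have hus : u ∈ Sy G y := h hu
    by_contra hne
    have hyf : y i = false := by
      cases hb : y i
      · rfl
      · exact absurd hb hne
    have : Matrix.vecMul u G i = 0 := hus i hyf
    have h1 : Matrix.vecMul u G i = 1 := by simpa [Iu] using hi
    rw [h1] at this
    exact one_ne_zero this
lemma exists_submodule_card {K : ℕ} (l : ℕ) (W : Submodule (ZMod 2) (Fin K → ZMod 2))
    (hW : 2 ^ l < Nat.card W) :
    ∃ V : Submodule (ZMod 2) (Fin K → ZMod 2), V ≤ W ∧ Nat.card V = 2 ^ (l + 1) := by
  classical
  haveI : Fact (Nat.Prime 2) := ⟨Nat.prime_two⟩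
  have hcard : ∀ U : Submodule (ZMod 2) (Fin K → ZMod 2),
      Nat.card U = 2 ^ Module.finrank (ZMod 2) U := by
    intro U
    rw [Nat.card_eq_fintype_card, Module.card_eq_pow_finrank (K := ZMod 2), ZMod.card]
  -- finrank W ≥ l + 1
  have hrank : l + 1 ≤ Module.finrank (ZMod 2) W := by
    by_contra hlt
    push_neg at hlt
    have : Nat.card W ≤ 2 ^ l := by
      rw [hcard W]
      exact Nat.pow_le_pow_right (by norm_num) (by omega)
    omega
  -- find l+1 linearly independent vectors in W
  have hind : ∀ n : ℕ, n ≤ Module.finrank (ZMod 2) W →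
      ∃ v : Fin n → W, LinearIndependent (ZMod 2) v := by
    intro n hn
    induction n with
    | zero => exact ⟨![], linearIndependent_empty_type⟩
    | succ m ih =>
      obtain ⟨v, hv⟩ := ih (by omega)
      obtain ⟨x, hx⟩ := exists_linearIndependent_cons_of_lt_finrank hv (by omega)
      exact ⟨Fin.cons x v, hx⟩
  obtain ⟨v, hv⟩ := hind (l + 1) hrank
  refine ⟨(Submodule.span (ZMod 2) (Set.range v)).map W.subtype, Submodule.map_subtype_le _ _, ?_⟩
  rw [hcard]
  congr 1
  rw [Submodule.finrank_map_subtype_eq]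
  rw [finrank_span_eq_card hv, Fintype.card_fin]
lemma EV_subset_T {K N : ℕ} (G : Matrix (Fin K) (Fin N) (ZMod 2)) (l : ℕ)
    (V : Submodule (ZMod 2) (Fin K → ZMod 2)) (hV : Nat.card V = 2 ^ (l + 1)) :
    EV G V ⊆ {y : Fin N → Bool | 2 ^ l < (Sy G y).ncard} := by
  intro y hy
  have hsub : (V : Set (Fin K → ZMod 2)) ⊆ Sy G y := (mem_EV_iff G V y).1 hy
  have h1 : (V : Set (Fin K → ZMod 2)).ncard ≤ (Sy G y).ncard :=
    Set.ncard_le_ncard hsub (Set.toFinite _)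
  have h2 : (V : Set (Fin K → ZMod 2)).ncard = 2 ^ (l + 1) := by
    rw [← Nat.card_coe_set_eq]
    exact hV
  simp only [Set.mem_setOf_eq]
  have : (2 : ℕ) ^ l < 2 ^ (l + 1) := by
    exact Nat.pow_lt_pow_right (by norm_num) (by omega)
  omega

lemma T_subset_union {K N : ℕ} (G : Matrix (Fin K) (Fin N) (ZMod 2)) (l : ℕ)
    (y : Fin N → Bool) (hy : 2 ^ l < (Sy G y).ncard) :
    ∃ V : Submodule (ZMod 2) (Fin K → ZMod 2),
      Nat.card V = 2 ^ (l + 1) ∧ y ∈ EV G V := by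
  have hc : 2 ^ l < Nat.card (SyMod G y) := by
    have h : Nat.card (SyMod G y) = (Sy G y).ncard := by
      rw [← Nat.card_coe_set_eq]
      rfl
    omega
  obtain ⟨V, hVle, hVcard⟩ := exists_submodule_card l (SyMod G y) hc
  refine ⟨V, hVcard, (mem_EV_iff G V y).2 ?_⟩
  intro u hu
  exact hVle hu

/-- Existence of a balanced family of subspaces of cardinality 2^(l+1). -/
theorem exists_balanced_subspace_family (K N : ℕ)
    (G : Matrix (Fin K) (Fin N) (ZMod 2))
    (ε : ℝ) (hε0 : 0 < ε) (hε1 : ε < 1) (Pe : ℝ) (hPe0 : 0 < Pe) (hPe1 : Pe < 1)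
    (l : ℕ)
    (hdmin : ∀ u : Fin K → ZMod 2, u ≠ 0 →
      Real.log (Pe / 8) / Real.log ε < ((Iu G u).card : ℝ))
    (hbig : prodMeas ε {y : Fin N → Bool | 2 ^ l < (Sy G y).ncard} > Pe) :
    ∃ P₁ : Set (Submodule (ZMod 2) (Fin K → ZMod 2)),
      (∀ V ∈ P₁, Nat.card V = 2 ^ (l + 1)) ∧
      3 / 8 * prodMeas ε {y : Fin N → Bool | 2 ^ l < (Sy G y).ncard}
          ≤ prodMeas ε (⋃ V ∈ P₁, EV G V) ∧
      prodMeas ε (⋃ V ∈ P₁, EV G V)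
          ≤ 1 / 2 * prodMeas ε {y : Fin N → Bool | 2 ^ l < (Sy G y).ncard} := by
  classical
  have hε0' : (0:ℝ) ≤ ε := hε0.le
  have hε1' : ε ≤ 1 := hε1.le
  set T := {y : Fin N → Bool | 2 ^ l < (Sy G y).ncard} with hT
  set m := prodMeas ε T with hm
  have hm_pos : 0 < m := lt_trans hPe0 hbig
  have hPem : Pe < m := hbig
  -- each good EV has small measure
  have hEVbound : ∀ V : Submodule (ZMod 2) (Fin K → ZMod 2),
      Nat.card V = 2 ^ (l + 1) → prodMeas ε (EV G V) ≤ Pe / 8 := by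
    intro V hV
    have hne : V ≠ ⊥ := by
      intro h
      rw [h] at hV
      have : Nat.card (⊥ : Submodule (ZMod 2) (Fin K → ZMod 2)) = 1 := by
        simp [Nat.card_eq_fintype_card]
      rw [this] at hV
      have : 2 ^ (l+1) ≠ 1 := Nat.ne_of_gt (Nat.one_lt_two_pow (by omega))
      omega
    obtain ⟨u, huV, hu0⟩ := Submodule.exists_mem_ne_zero_of_ne_bot hne
    have h1 : prodMeas ε (EV G V) ≤ prodMeas ε (Eu G u) :=
      prodMeas_mono hε0' hε1' (EV_subset_Eu G V huV)
    rw [prodMeas_Eu G u hε0' hε1'] at h1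
    have hd := hdmin u hu0
    have hlogε : Real.log ε < 0 := Real.log_neg hε0 hε1
    rw [div_lt_iff_of_neg hlogε] at hd
    have hlt : ε ^ (Iu G u).card < Pe / 8 := by
      have hpow : (0:ℝ) < ε ^ (Iu G u).card := pow_pos hε0 _
      have hPe8 : (0:ℝ) < Pe / 8 := by linarith
      rw [← Real.log_lt_log_iff hpow hPe8, Real.log_pow]
      exact hd
    linarith
  -- the finite list of all good submodules
  haveI : Finite (Submodule (ZMod 2) (Fin K → ZMod 2)) :=
    Finite.of_injective (fun V => (V : Set (Fin K → ZMod 2))) SetLike.coe_injective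
  have hfin : {V : Submodule (ZMod 2) (Fin K → ZMod 2) |
      Nat.card V = 2 ^ (l + 1)}.Finite := Set.toFinite _
  set L := hfin.toFinset.toList with hL
  have hLmem : ∀ V, V ∈ L ↔ Nat.card V = 2 ^ (l + 1) := by
    intro V
    rw [hL, Finset.mem_toList, Set.Finite.mem_toFinset]
    rfl
  set g : ℕ → ℝ := fun k => prodMeas ε (⋃ V ∈ {V | V ∈ L.take k}, EV G V) with hg
  have hg0 : g 0 = 0 := by
    have h0 : ({V | V ∈ L.take 0} : Set (Submodule (ZMod 2) (Fin K → ZMod 2))) = ∅ := by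
      rw [List.take_zero]
      ext V
      simp
    simp only [hg, h0]
    rw [Set.biUnion_empty, prodMeas_empty]
  have hgstep : ∀ k, g (k + 1) ≤ g k + Pe / 8 := by
    intro k
    by_cases hk : k < L.length
    · have htake : L.take (k + 1) = L.take k ++ [L[k]] := by
        rw [List.take_succ, List.getElem?_eq_getElem hk]
        rfl
      have hset : ({V | V ∈ L.take (k+1)} : Set (Submodule (ZMod 2) (Fin K → ZMod 2)))
          = {V | V ∈ L.take k} ∪ {L[k]} := by
        ext V
        simp only [Set.mem_union, Set.mem_setOf_eq, Set.mem_singleton_iff, htake,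
          List.mem_append, List.mem_singleton]
      have hunion : (⋃ V ∈ {V | V ∈ L.take (k+1)}, EV G V)
          = (⋃ V ∈ {V | V ∈ L.take k}, EV G V) ∪ EV G L[k] := by
        rw [hset, Set.biUnion_union, Set.biUnion_singleton]
      have hLk : Nat.card (L[k] : Submodule (ZMod 2) (Fin K → ZMod 2)) = 2 ^ (l+1) :=
        (hLmem _).1 (List.getElem_mem hk)
      calc g (k+1) = prodMeas ε ((⋃ V ∈ {V | V ∈ L.take k}, EV G V) ∪ EV G L[k]) := by
            simp only [hg]; rw [hunion]
        _ ≤ g k + prodMeas ε (EV G L[k]) := prodMeas_union_le hε0' hε1' _ _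
        _ ≤ g k + Pe / 8 := by linarith [hEVbound L[k] hLk]
    · have htk : L.take (k+1) = L.take k := by
        rw [List.take_of_length_le (by omega), List.take_of_length_le (by omega)]
      have heq : g (k+1) = g k := by simp only [hg, htk]
      linarith
  have hgend : g L.length = m := by
    have hsetT : (⋃ V ∈ {V | V ∈ L.take L.length}, EV G V) = T := by
      apply Set.Subset.antisymm
      · apply Set.iUnion₂_subset
        intro V hV
        have : V ∈ L := by
          rw [List.take_length] at hV
          exact hV
        exact EV_subset_T G l V ((hLmem V).1 this)
      · intro y hy
        obtain ⟨V, hVcard, hyV⟩ := T_subset_union G l y hy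
        refine Set.mem_biUnion ?_ hyV
        rw [List.take_length]
        exact (hLmem V).2 hVcard
    simp only [hg, hsetT, hm]
  -- minimal k reaching 3/8 m
  have hex : ∃ k, 3 / 8 * m ≤ g k := ⟨L.length, by rw [hgend]; linarith⟩
  set k := Nat.find hex with hkdef
  have hk1 : 3 / 8 * m ≤ g k := Nat.find_spec hex
  have hk0 : k ≠ 0 := by
    intro h
    rw [h, hg0] at hk1
    linarith
  have hprev : g (k - 1) < 3 / 8 * m := by
    have := Nat.find_min hex (m := k - 1) (by omega)
    linarith [not_le.mp this]
  have hkup : g k ≤ 1 / 2 * m := by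
    have hstep := hgstep (k - 1)
    have hkk : k - 1 + 1 = k := Nat.succ_pred_eq_of_pos (Nat.pos_of_ne_zero hk0)
    rw [hkk] at hstep
    linarith
  refine ⟨{V | V ∈ L.take k}, ?_, ?_, ?_⟩
  · intro V hV
    exact (hLmem V).1 (List.mem_of_mem_take hV)
  · exact hk1
  · exact hkup
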